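/- Let (X̂_i) be a random walk on ℤ with i.i.d. steps uniform on {-1,0,1}, started at X̂_0 = 1, and let M_j = (f(X̂_j)/f(X̂_0)) · ∏_{i=0}^{j-1} w(X̂_i), where f(x) = x(x+3)(2x+3) and w(x) = x(x+3)/((x+1)(x+2)). Then (M_j)_{j≥0} is a martingale with respect to the natural filtration of X̂. -/

import Mathlib

open MeasureTheory Finset

noncomputable def f (x : ℝ) : ℝ := x * (x + 3) * (2 * x + 3)

noncomputable def w (x : ℝ) : ℝ := x * (x + 3) / ((x + 1) * (x + 2))

/-!
Averaging `f` over the three neighbours of `x` gives `(x + 1)(x + 2)(2x + 3)`, so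
`w x · (f (x - 1) + f x + f (x + 1)) / 3 = f x` wherever `w` is not singular, i.e. away from
`x = -1, -2`. This is exactly the one-step martingale identity for `∏_{i<j} w(X̂_i) · f(X̂_j)`.
A walk with steps in `{-1, 0, 1}` started at `x₀ ≥ 0` can only reach `-1` or `-2` after
visiting `0`, where `w` vanishes, so along every path the singular case contributes `0 = 0`.
Integrability is free because `|X̂_j| ≤ x₀ + j`.
-/

lemma f_one : f 1 = 20 := by norm_num [f]

lemma w_mul_avg_f (x : ℝ) (hx : (x + 1) * (x + 2) ≠ 0) :
    w x * ((f (x - 1) + f x + f (x + 1)) / 3) = f x := by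
  have havg : (f (x - 1) + f x + f (x + 1)) / 3 = (x + 1) * (x + 2) * (2 * x + 3) := by
    simp only [f]; ring
  rw [havg, w, f, div_mul_eq_mul_div, div_eq_iff hx]
  ring

section LazyWalk

variable {a : ℕ → ℤ}

lemma abs_sub_apply_zero_le_of_abs_step_le_one (hstep : ∀ j, |a (j + 1) - a j| ≤ 1) (j : ℕ) :
    |a j - a 0| ≤ j := by
  induction j with
  | zero => simp
  | succ j ih =>
    push_cast
    linarith [abs_sub_le (a (j + 1)) (a j) (a 0), hstep j]

lemma exists_lt_eq_zero_of_neg (h0 : 0 ≤ a 0) (hstep : ∀ j, |a (j + 1) - a j| ≤ 1) {j : ℕ}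
    (hj : a j < 0) : ∃ i < j, a i = 0 := by
  induction j with
  | zero => omega
  | succ j ih =>
    by_cases hneg : a j < 0
    · obtain ⟨i, hij, hi⟩ := ih hneg
      exact ⟨i, hij.trans j.lt_succ_self, hi⟩
    · have := abs_le.1 (hstep j)
      exact ⟨j, j.lt_succ_self, by omega⟩

lemma prod_w_mul_avg_f (h0 : 0 ≤ a 0) (hstep : ∀ j, |a (j + 1) - a j| ≤ 1) (j : ℕ) :
    (∏ i ∈ range (j + 1), w (a i)) * ((f (a j - 1) + f (a j) + f (a j + 1)) / 3) =
      (∏ i ∈ range j, w (a i)) * f (a j) := by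
  rw [prod_range_succ, mul_assoc]
  by_cases hsing : ((a j : ℝ) + 1) * ((a j : ℝ) + 2) = 0
  · have hneg : a j < 0 := by
      rcases mul_eq_zero.1 hsing with h | h
      · have : a j = -1 := by exact_mod_cast eq_neg_of_add_eq_zero_left h
        omega
      · have : a j = -2 := by exact_mod_cast eq_neg_of_add_eq_zero_left h
        omega
    obtain ⟨i, hij, hi⟩ := exists_lt_eq_zero_of_neg h0 hstep hneg
    have hprod : ∏ i ∈ range j, w (a i) = 0 :=
      prod_eq_zero (mem_range.2 hij) (by simp [hi, w])
    simp [hprod]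
  · rw [w_mul_avg_f _ hsing]

end LazyWalk

lemma abs_le_sum_abs_Icc (g : ℤ → ℝ) {N n : ℤ} (hn : |n| ≤ N) :
    |g n| ≤ ∑ k ∈ Icc (-N) N, |g k| :=
  single_le_sum (fun k _ => abs_nonneg (g k)) (mem_Icc.2 (abs_le.1 hn))

lemma integrable_prod_comp_mul_comp {Ω : Type*} {m0 : MeasurableSpace Ω} {μ : Measure Ω}
    [IsFiniteMeasure μ] {X : ℕ → Ω → ℤ} (hX : ∀ i, Measurable (X i)) {N : ℤ} {j : ℕ}
    (hbound : ∀ i ≤ j, ∀ ω, |X i ω| ≤ N) (g h : ℤ → ℝ) :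
    Integrable (fun ω => (∏ i ∈ range j, g (X i ω)) * h (X j ω)) μ := by
  refine Integrable.of_bound (C := (∑ k ∈ Icc (-N) N, |g k|) ^ j * ∑ k ∈ Icc (-N) N, |h k|)
    (Measurable.aestronglyMeasurable ?_) (ae_of_all _ fun ω => ?_)
  · exact (Finset.measurable_prod _ fun i _ => Measurable.of_discrete.comp (hX i)).mul
      (Measurable.of_discrete.comp (hX j))
  · rw [Real.norm_eq_abs, abs_mul, abs_prod]
    calc (∏ i ∈ range j, |g (X i ω)|) * |h (X j ω)|
        ≤ (∏ _i ∈ range j, ∑ k ∈ Icc (-N) N, |g k|) * ∑ k ∈ Icc (-N) N, |h k| := by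
          gcongr with i hi
          · exact abs_le_sum_abs_Icc g (hbound i (mem_range.1 hi).le ω)
          · exact abs_le_sum_abs_Icc h (hbound j le_rfl ω)
      _ = _ := by rw [prod_const, card_range]

theorem martingale_prod_w_mul_f {Ω : Type*} {m0 : MeasurableSpace Ω} {μ : Measure Ω}
    [IsFiniteMeasure μ] {ℱ : Filtration ℕ m0} {X : ℕ → Ω → ℤ} {x₀ : ℤ}
    (hadapted : ∀ j, Measurable[ℱ j] (X j)) (hstart : ∀ ω, X 0 ω = x₀) (hx₀ : 0 ≤ x₀)
    (hstep : ∀ j ω, |X (j + 1) ω - X j ω| ≤ 1)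
    (hcond : ∀ j, ∀ g : ℤ → ℝ,
      μ[(fun ω => g (X (j + 1) ω)) | ℱ j]
        =ᵐ[μ] fun ω => (g (X j ω - 1) + g (X j ω) + g (X j ω + 1)) / 3) :
    Martingale (fun j ω => (∏ i ∈ range j, w (X i ω)) * f (X j ω)) ℱ μ := by
  have hmeas : ∀ {i j}, i ≤ j → ∀ g : ℤ → ℝ, Measurable[ℱ j] fun ω => g (X i ω) :=
    fun hij g => (Measurable.of_discrete (f := g)).comp ((hadapted _).mono (ℱ.mono hij) le_rfl)
  have hX : ∀ i, Measurable (X i) := fun i => (hadapted i).mono (ℱ.le i) le_rfl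
  have hbound : ∀ j, ∀ i ≤ j, ∀ ω, |X i ω| ≤ x₀ + j := fun j i hij ω => by
    have := abs_le.1 (abs_sub_apply_zero_le_of_abs_step_le_one (a := (X · ω)) (fun j => hstep j ω) i)
    rw [hstart] at this
    exact abs_le.2 ⟨by omega, by omega⟩
  have hint : ∀ j, Integrable (fun ω => (∏ i ∈ range j, w (X i ω)) * f (X j ω)) μ := fun j =>
    integrable_prod_comp_mul_comp hX (hbound j) (fun n : ℤ => w n) (fun n : ℤ => f n)
  refine martingale_nat (fun j => Measurable.stronglyMeasurable ?_) hint fun j => ?_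
  · exact (Finset.measurable_prod _ fun i hi => hmeas (mem_range.1 hi).le (fun n : ℤ => w n)).mul
      (hmeas le_rfl (fun n : ℤ => f n))
  · have hprod : StronglyMeasurable[ℱ j] fun ω => ∏ i ∈ range (j + 1), w (X i ω) :=
      (Finset.measurable_prod _ fun i hi =>
        hmeas (Nat.lt_succ_iff.1 (mem_range.1 hi)) (fun n : ℤ => w n)).stronglyMeasurable
    have hnext : Integrable (fun ω => f (X (j + 1) ω)) μ := by
      simpa using integrable_prod_comp_mul_comp (μ := μ) hX (hbound (j + 1)) (fun _ => 1) (f ·)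
    filter_upwards [condExp_mul_of_stronglyMeasurable_left hprod (hint (j + 1)) hnext,
      hcond j (f ·)] with ω hpull havg
    refine Eq.trans ?_ hpull.symm
    rw [Pi.mul_apply, havg]
    push_cast
    exact (prod_w_mul_avg_f (a := (X · ω)) (by rw [hstart]; exact hx₀) (fun j => hstep j ω) j).symm

/-- If `X̂` is a random walk with i.i.d. steps uniform on `{-1,0,1}` started at `1`,
then `M_j = (f(X̂_j)/f(X̂_0)) · ∏_{i<j} w(X̂_i)` is a martingale for the natural
filtration of `X̂`. -/
theorem stmt_2 {Ω : Type*} {m0 : MeasurableSpace Ω} (μ : Measure Ω)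
    [IsProbabilityMeasure μ] (ℱ : Filtration ℕ m0)
    (X : ℕ → Ω → ℤ)
    (hadapted : ∀ j, Measurable[ℱ j] (X j))
    (hstart : ∀ ω, X 0 ω = 1)
    (hstep : ∀ j ω, |X (j + 1) ω - X j ω| ≤ 1)
    (hcond : ∀ j, ∀ g : ℤ → ℝ,
      μ[(fun ω => g (X (j + 1) ω)) | ℱ j]
        =ᵐ[μ] fun ω => (g (X j ω - 1) + g (X j ω) + g (X j ω + 1)) / 3)
    (M : ℕ → Ω → ℝ)
    (hM : ∀ j ω, M j ω =
      f ((X j ω : ℝ)) / f ((X 0 ω : ℝ)) * ∏ i ∈ Finset.range j, w ((X i ω : ℝ))) :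
    Martingale M ℱ μ := by
  have hM' : M = (20 : ℝ)⁻¹ • fun j ω => (∏ i ∈ range j, w (X i ω)) * f (X j ω) := by
    ext j ω
    simp only [hM, hstart, Int.cast_one, f_one, Pi.smul_apply, smul_eq_mul]
    ring
  rw [hM']
  exact (martingale_prod_w_mul_f hadapted hstart zero_le_one hstep hcond).smul _
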